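/- arXiv:0712.1142 — 6 statements merged into one kernel-verified Lean document; each statement's English description precedes it below -/
import Mathlib

section
/- Assume every element of T(S) is compatible with the partial order P on Y. Then for every μ ∈ Y, DIS(μ,P,S) equals the topological closure of the additive subgroup of M̄ generated by {a − t(a) : a ∈ DSM(μ,P), t ∈ T1(S)}, and also equals the topological closure of the additive subgroup of M̄ generated by {a − t(a) : a ∈ DSM(μ,P), t ∈ T(S)}. Moreover, every resolvable ambiguity of T1(S) is resolvable relative to P. -/
open Set Filter Topology Pointwise

/-- The set of all finite compositions of elements of `T1`, including the identity. -/
def TS {M : Type*} [AddCommGroup M] (T1 : Set (AddMonoid.End M)) : Set (AddMonoid.End M) :=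
  ↑(Submonoid.closure T1)

/-- Smallest topologically closed additive subgroup containing `Z` and stable under `R`. -/
def Cspan {M : Type*} [AddCommGroup M] [TopologicalSpace M]
    (R : Set (AddMonoid.End M)) (Z : Set M) : Set M :=
  ⋂₀ {N : Set M | Z ⊆ N ∧ IsClosed N ∧ (∃ H : AddSubgroup M, N = ↑H) ∧
      ∀ r ∈ R, ∀ a ∈ N, r a ∈ N}

def IrrS {M : Type*} [AddCommGroup M] (T1 : Set (AddMonoid.End M)) : Set M :=
  {a | ∀ t ∈ TS T1, t a = a}

def IS {M : Type*} [AddCommGroup M] [TopologicalSpace M]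
    (T1 : Set (AddMonoid.End M)) : Set M :=
  closure (AddSubgroup.closure {x : M | ∃ a : M, ∃ t ∈ TS T1, x = a - t a} : Set M)

def Stuck {M : Type*} [AddCommGroup M] (T1 : Set (AddMonoid.End M)) (N : Set M) (a : M) :
    Prop :=
  ∀ t ∈ TS T1, t a ∈ N

def PerE {M : Type*} [AddCommGroup M] (T1 : Set (AddMonoid.End M)) (ε : Set M) : Set M :=
  {a | ∀ t1 ∈ TS T1, ∃ t2 ∈ TS T1, ∃ b ∈ IrrS T1,
    Stuck T1 {x | x - b ∈ ε} (t2 (t1 a))}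

def Per {M : Type*} [AddCommGroup M] (T1 : Set (AddMonoid.End M))
    (B : ℕ → AddSubgroup M) : Set M :=
  ⋂ n, PerE T1 (B n)

def UniqE {M : Type*} [AddCommGroup M] (T1 : Set (AddMonoid.End M)) (ε : Set M) : Set M :=
  {a | ∀ t1 ∈ TS T1, ∀ t2 ∈ TS T1, ∀ b1 ∈ IrrS T1, ∀ b2 ∈ IrrS T1,
    Stuck T1 {x | x - b1 ∈ ε} (t1 a) → Stuck T1 {x | x - b2 ∈ ε} (t2 a) → b1 - b2 ∈ ε}

def RedE {M : Type*} [AddCommGroup M] (T1 : Set (AddMonoid.End M))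
    (B : ℕ → AddSubgroup M) (ε : Set M) : Set M :=
  Per T1 B ∩ UniqE T1 ε

def Red {M : Type*} [AddCommGroup M] (T1 : Set (AddMonoid.End M))
    (B : ℕ → AddSubgroup M) : Set M :=
  ⋂ n, RedE T1 B (B n)

def Equicont {M : Type*} [AddCommGroup M] (T1 : Set (AddMonoid.End M))
    (B : ℕ → AddSubgroup M) : Prop :=
  ∀ n : ℕ, ∃ m : ℕ, ∀ t ∈ TS T1, ∀ a ∈ B m, t a ∈ B n

def DSM {M : Type*} [AddCommGroup M] [TopologicalSpace M]
    (R : Set (AddMonoid.End M)) (Y : Set M) (P : M → M → Prop) (μ : M) : Set M :=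
  Cspan R {ν | ν ∈ Y ∧ P ν μ}

def Compatible {M : Type*} [AddCommGroup M] [TopologicalSpace M]
    (R : Set (AddMonoid.End M)) (Y : Set M) (P : M → M → Prop)
    (t : AddMonoid.End M) : Prop :=
  ∀ μ ∈ Y, t μ = μ ∨ t μ ∈ DSM R Y P μ

def DIS {M : Type*} [AddCommGroup M] [TopologicalSpace M]
    (R : Set (AddMonoid.End M)) (Y : Set M) (P : M → M → Prop)
    (T1 : Set (AddMonoid.End M)) (μ : M) : Set M :=
  Cspan R {x | ∃ ν ∈ Y, P ν μ ∧ ∃ t ∈ T1, x = ν - t ν}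

def TDCC {M : Type*} [AddCommGroup M] [TopologicalSpace M]
    (Y : Set M) (P : M → M → Prop) : Prop :=
  ∀ μ : ℕ → M, (∀ n, μ n ∈ Y) → (∀ n, P (μ (n + 1)) (μ n)) →
    Filter.Tendsto μ Filter.atTop (nhds 0)

/-!
Compatibility makes every `t ∈ TS T1` map `DSM μ` into itself. Hence `a - t a ∈ DIS μ` for
`a ∈ DSM μ`: for `t ∈ T1` because `{a | a - t a ∈ DIS μ}` is a closed `R`-stable subgroup
containing the generators of `DSM μ`, and for products by telescoping,
`a - (s * u) a = (a - u a) + (u a - s (u a))`. The generating sets `{a - t a}` are `R`-stable,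
so the closed subgroups they generate are already `R`-stable; this gives both descriptions of
`DIS μ`. For a resolvable ambiguity, `t1 μ - t2 μ` is a limit of the elements
`(t1 μ - t3 (t1 μ)) - (t2 μ - t4 (t2 μ))` of the closed set `DIS μ`.
-/

section Cspan

variable {M : Type*} [AddCommGroup M] [TopologicalSpace M] {R : Set (AddMonoid.End M)}
  {Z Z' : Set M}

theorem Cspan_subset {H : AddSubgroup M} (hZ : Z ⊆ H) (hH : IsClosed (H : Set M))
    (hR : ∀ r ∈ R, ∀ a ∈ H, r a ∈ H) : Cspan R Z ⊆ H :=
  sInter_subset_of_mem ⟨hZ, hH, ⟨H, rfl⟩, hR⟩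

theorem subset_Cspan : Z ⊆ Cspan R Z :=
  subset_sInter fun _ hN => hN.1

theorem isClosed_Cspan : IsClosed (Cspan R Z) :=
  isClosed_sInter fun _ hN => hN.2.1

theorem map_mem_Cspan {r : AddMonoid.End M} (hr : r ∈ R) {a : M} (ha : a ∈ Cspan R Z) :
    r a ∈ Cspan R Z :=
  mem_sInter.2 fun N hN => hN.2.2.2 r hr a (mem_sInter.1 ha N hN)

variable (R Z) in
def addSubgroupCspan : AddSubgroup M where
  carrier := Cspan R Z
  zero_mem' := mem_sInter.2 fun _ ⟨_, _, ⟨H, hH⟩, _⟩ => hH ▸ H.zero_mem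
  add_mem' ha hb := mem_sInter.2 fun N hN => by
    obtain ⟨H, rfl⟩ := hN.2.2.1
    exact H.add_mem (mem_sInter.1 ha _ hN) (mem_sInter.1 hb _ hN)
  neg_mem' ha := mem_sInter.2 fun N hN => by
    obtain ⟨H, rfl⟩ := hN.2.2.1
    exact H.neg_mem (mem_sInter.1 ha _ hN)

theorem Cspan_mono (h : Z ⊆ Z') : Cspan R Z ⊆ Cspan R Z' :=
  Cspan_subset (H := addSubgroupCspan R Z') (h.trans subset_Cspan) isClosed_Cspan
    fun _ hr _ ha => map_mem_Cspan hr ha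

theorem mapsTo_Cspan {f : AddMonoid.End M} (hf : Continuous f)
    (hfR : ∀ r ∈ R, ∀ a, f (r a) = r (f a))
    (hZ : MapsTo f Z (Cspan R Z')) : MapsTo f (Cspan R Z) (Cspan R Z') :=
  Cspan_subset (H := (addSubgroupCspan R Z').comap f) hZ (isClosed_Cspan.preimage hf)
    fun r hr a ha => by
      show f (r a) ∈ Cspan R Z'
      rw [hfR r hr a]
      exact map_mem_Cspan hr ha

theorem Cspan_eq_closure_addSubgroupClosure [IsTopologicalAddGroup M] {W : Set M}
    (hZW : Z ⊆ W) (hW : W ⊆ Cspan R Z) (hRcont : ∀ r ∈ R, Continuous r)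
    (hRW : ∀ r ∈ R, MapsTo r W W) :
    Cspan R Z = closure (AddSubgroup.closure W) := by
  refine subset_antisymm ?_ ?_
  · refine Cspan_subset (H := (AddSubgroup.closure W).topologicalClosure)
      (hZW.trans (AddSubgroup.subset_closure.trans subset_closure))
      (AddSubgroup.isClosed_topologicalClosure _) fun r hr a ha => ?_
    have hr' : AddSubgroup.closure W ≤ (AddSubgroup.closure W).comap (r : M →+ M) :=
      (AddSubgroup.closure_le _).2 fun w hw => AddSubgroup.subset_closure (hRW r hr hw)
    exact map_mem_closure (hRcont r hr) ha fun g hg => hr' hg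
  · exact closure_minimal ((AddSubgroup.closure_le (addSubgroupCspan R Z)).2 hW) isClosed_Cspan

end Cspan

section TS

variable {M : Type*} [AddCommGroup M] {T1 : Set (AddMonoid.End M)} {t : AddMonoid.End M}

theorem apply_comm_of_mem_TS {R : Set (AddMonoid.End M)}
    (hT1 : ∀ t ∈ T1, ∀ r ∈ R, ∀ a, t (r a) = r (t a)) (ht : t ∈ TS T1) :
    ∀ r ∈ R, ∀ a, t (r a) = r (t a) := by
  have hle : Submonoid.closure T1 ≤ Submonoid.centralizer R :=
    Submonoid.closure_le.2 fun s hs r hr => AddMonoidHom.ext fun a => (hT1 s hs r hr a).symm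
  exact fun r hr a => (DFunLike.congr_fun (hle ht r hr) a).symm

theorem mapsTo_of_mem_TS {A : Set M} (hA : ∀ t ∈ T1, MapsTo t A A) (ht : t ∈ TS T1) :
    MapsTo t A A :=
  Submonoid.closure_induction hA (mapsTo_id A) (fun _ _ _ _ hx hy => hx.comp hy) ht

theorem sub_apply_mem_of_mem_TS {A : Set M} {D : AddSubgroup M} (hA : ∀ t ∈ T1, MapsTo t A A)
    (hD : ∀ t ∈ T1, ∀ a ∈ A, a - t a ∈ D) (ht : t ∈ TS T1) : ∀ a ∈ A, a - t a ∈ D := by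
  induction ht using Submonoid.closure_induction with
  | mem s hs => exact hD s hs
  | one => simp
  | mul s u _ hu hs_ih hu_ih =>
    intro a ha
    have hsplit : a - (s * u) a = (a - u a) + (u a - s (u a)) := by
      rw [AddMonoid.End.coe_mul, Function.comp_apply]; abel
    rw [hsplit]
    exact D.add_mem (hu_ih a ha) (hs_ih (u a) (mapsTo_of_mem_TS hA hu ha))

theorem mapsTo_setOf_sub_apply {A : Set M} {T : Set (AddMonoid.End M)} {r : AddMonoid.End M}
    (hA : MapsTo r A A) (hT : ∀ t ∈ T, ∀ a, t (r a) = r (t a)) :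
    MapsTo r {x | ∃ a ∈ A, ∃ t ∈ T, x = a - t a} {x | ∃ a ∈ A, ∃ t ∈ T, x = a - t a} := by
  rintro _ ⟨a, ha, t, ht, rfl⟩
  exact ⟨r a, hA ha, t, ht, by rw [map_sub, hT t ht a]⟩

end TS

section DIS

variable {M : Type*} [AddCommGroup M] [TopologicalSpace M] {R : Set (AddMonoid.End M)}
  {Y : Set M} {P : M → M → Prop} {T1 : Set (AddMonoid.End M)} {μ : M}

theorem DSM_mono (hPtrans : ∀ μ ν ρ, P μ ν → P ν ρ → P μ ρ) {ν : M} (h : P ν μ) :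
    DSM R Y P ν ⊆ DSM R Y P μ :=
  Cspan_mono fun _ hρ => ⟨hρ.1, hPtrans _ _ _ hρ.2 h⟩

theorem mapsTo_DSM (hPtrans : ∀ μ ν ρ, P μ ν → P ν ρ → P μ ρ) {t : AddMonoid.End M}
    (ht : Continuous t) (htR : ∀ r ∈ R, ∀ a, t (r a) = r (t a)) (htP : Compatible R Y P t)
    (μ : M) : MapsTo t (DSM R Y P μ) (DSM R Y P μ) :=
  mapsTo_Cspan ht htR fun ν ⟨hνY, hνμ⟩ => by
    rcases htP ν hνY with hfix | hlower
    · rw [hfix]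
      exact subset_Cspan ⟨hνY, hνμ⟩
    · exact DSM_mono hPtrans hνμ hlower

variable [IsTopologicalAddGroup M]

theorem sub_apply_mem_DIS {t : AddMonoid.End M} (ht : t ∈ T1) (htc : Continuous t)
    (htR : ∀ r ∈ R, ∀ a, t (r a) = r (t a)) {a : M} (ha : a ∈ DSM R Y P μ) :
    a - t a ∈ DIS R Y P T1 μ := by
  refine mapsTo_Cspan (f := 1 - t) (continuous_id.sub htc)
    (fun r hr b => show r b - t (r b) = r (b - t b) by rw [map_sub, htR r hr b]) ?_ ha
  rintro ν ⟨hνY, hνμ⟩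
  exact subset_Cspan ⟨ν, hνY, hνμ, t, ht, rfl⟩

theorem sub_apply_mem_DIS_of_mem_TS (hPtrans : ∀ μ ν ρ, P μ ν → P ν ρ → P μ ρ)
    (hT1cont : ∀ t ∈ T1, Continuous t) (hT1comm : ∀ t ∈ T1, ∀ r ∈ R, ∀ a, t (r a) = r (t a))
    (hcompat : ∀ t ∈ T1, Compatible R Y P t) {t : AddMonoid.End M} (ht : t ∈ TS T1) {a : M}
    (ha : a ∈ DSM R Y P μ) : a - t a ∈ DIS R Y P T1 μ :=
  sub_apply_mem_of_mem_TS (D := addSubgroupCspan R _)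
    (fun s hs => mapsTo_DSM hPtrans (hT1cont s hs) (hT1comm s hs) (hcompat s hs) μ)
    (fun s hs _ hb => sub_apply_mem_DIS hs (hT1cont s hs) (hT1comm s hs) hb) ht a ha

theorem DIS_eq_closure_addSubgroupClosure {T : Set (AddMonoid.End M)} (hT1T : T1 ⊆ T)
    (hTTS : T ⊆ TS T1) (hRcont : ∀ r ∈ R, Continuous r)
    (hPtrans : ∀ μ ν ρ, P μ ν → P ν ρ → P μ ρ) (hT1cont : ∀ t ∈ T1, Continuous t)
    (hT1comm : ∀ t ∈ T1, ∀ r ∈ R, ∀ a, t (r a) = r (t a))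
    (hcompat : ∀ t ∈ T1, Compatible R Y P t) (μ : M) :
    DIS R Y P T1 μ =
      closure (AddSubgroup.closure {x | ∃ a ∈ DSM R Y P μ, ∃ t ∈ T, x = a - t a}) := by
  refine Cspan_eq_closure_addSubgroupClosure ?_ ?_ hRcont fun r hr => ?_
  · rintro _ ⟨ν, hνY, hνμ, t, ht, rfl⟩
    exact ⟨ν, subset_Cspan ⟨hνY, hνμ⟩, t, hT1T ht, rfl⟩
  · rintro _ ⟨a, ha, t, ht, rfl⟩
    exact sub_apply_mem_DIS_of_mem_TS hPtrans hT1cont hT1comm hcompat (hTTS ht) ha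
  · exact mapsTo_setOf_sub_apply (fun _ ha => map_mem_Cspan hr ha)
      fun t ht => apply_comm_of_mem_TS hT1comm (hTTS ht) r hr

theorem sub_mem_DIS_of_forall_nhds (hPtrans : ∀ μ ν ρ, P μ ν → P ν ρ → P μ ρ)
    (hT1cont : ∀ t ∈ T1, Continuous t) (hT1comm : ∀ t ∈ T1, ∀ r ∈ R, ∀ a, t (r a) = r (t a))
    (hcompat : ∀ t ∈ T1, Compatible R Y P t) {a b : M} (ha : a ∈ DSM R Y P μ)
    (hb : b ∈ DSM R Y P μ)
    (hres : ∀ U ∈ 𝓝 (0 : M), ∃ t3 ∈ TS T1, ∃ t4 ∈ TS T1, t3 a - t4 b ∈ U) :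
    a - b ∈ DIS R Y P T1 μ := by
  refine isClosed_Cspan.closure_subset (mem_closure_iff_nhds_zero.2 fun U hU => ?_)
  obtain ⟨t3, ht3, t4, ht4, hU⟩ := hres (-U) (neg_mem_nhds_zero M hU)
  refine ⟨(a - t3 a) - (b - t4 b), (addSubgroupCspan R _).sub_mem
    (sub_apply_mem_DIS_of_mem_TS hPtrans hT1cont hT1comm hcompat ht3 ha)
    (sub_apply_mem_DIS_of_mem_TS hPtrans hT1cont hT1comm hcompat ht4 hb), ?_⟩
  rw [Set.mem_neg] at hU
  convert hU using 1
  abel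

end DIS

theorem DIS_characterisation_and_relative_resolvability_general
    {M : Type*} [AddCommGroup M] [UniformSpace M] [IsUniformAddGroup M]
    (B : ℕ → AddSubgroup M)
    (hBbasis : (nhds (0 : M)).HasBasis (fun _ : ℕ => True) (fun n => (B n : Set M)))
    (R : Set (AddMonoid.End M))
    (hRcont : ∀ r ∈ R, Continuous r)
    (T1 : Set (AddMonoid.End M))
    (hT1cont : ∀ t ∈ T1, Continuous t)
    (hT1comm : ∀ t ∈ T1, ∀ r ∈ R, ∀ a : M, t (r a) = r (t a))
    (Y : Set M)
    (P : M → M → Prop)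
    (hPtrans : ∀ μ ν ρ, P μ ν → P ν ρ → P μ ρ)
    (hcompat : ∀ t ∈ TS T1, Compatible R Y P t) :
    (∀ μ ∈ Y,
        DIS R Y P T1 μ =
          closure (AddSubgroup.closure
            {x : M | ∃ a ∈ DSM R Y P μ, ∃ t ∈ T1, x = a - t a} : Set M) ∧
        DIS R Y P T1 μ =
          closure (AddSubgroup.closure
            {x : M | ∃ a ∈ DSM R Y P μ, ∃ t ∈ TS T1, x = a - t a} : Set M)) ∧
    (∀ μ ∈ Y, ∀ t1 ∈ T1, ∀ t2 ∈ T1, t1 μ ≠ μ → t2 μ ≠ μ →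
      (∀ n : ℕ, ∃ t3 ∈ TS T1, ∃ t4 ∈ TS T1, t3 (t1 μ) - t4 (t2 μ) ∈ B n) →
      t1 μ - t2 μ ∈ DIS R Y P T1 μ) := by
  have hcompat1 : ∀ t ∈ T1, Compatible R Y P t := fun t ht =>
    hcompat t (Submonoid.subset_closure ht)
  refine ⟨fun μ _ => ⟨?_, ?_⟩, ?_⟩
  · exact DIS_eq_closure_addSubgroupClosure subset_rfl (fun _ ht => Submonoid.subset_closure ht)
      hRcont hPtrans hT1cont hT1comm hcompat1 μ
  · exact DIS_eq_closure_addSubgroupClosure (fun _ ht => Submonoid.subset_closure ht) subset_rfl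
      hRcont hPtrans hT1cont hT1comm hcompat1 μ
  intro μ hμ t1 ht1 t2 ht2 hne1 hne2 hres
  refine sub_mem_DIS_of_forall_nhds hPtrans hT1cont hT1comm hcompat1
    ((hcompat1 t1 ht1 μ hμ).resolve_left hne1) ((hcompat1 t2 ht2 μ hμ).resolve_left hne2)
    fun U hU => ?_
  obtain ⟨n, -, hn⟩ := hBbasis.mem_iff.1 hU
  obtain ⟨t3, ht3, t4, ht4, h⟩ := hres n
  exact ⟨t3, ht3, t4, ht4, hn h⟩

theorem DIS_characterisation_and_relative_resolvability
    {M : Type*} [AddCommGroup M] [UniformSpace M] [IsUniformAddGroup M]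
    [CompleteSpace M] [T2Space M]
    (B : ℕ → AddSubgroup M)
    (hBopen : ∀ n, IsOpen (B n : Set M))
    (hBanti : ∀ n, (B (n + 1) : Set M) ⊆ (B n : Set M))
    (hBbasis : (nhds (0 : M)).HasBasis (fun _ : ℕ => True) (fun n => (B n : Set M)))
    (hBsep : ⋂ n, (B n : Set M) = {0})
    (R : Set (AddMonoid.End M))
    (hRcont : ∀ r ∈ R, Continuous r)
    (hRsmall : ∀ r ∈ R, ∀ n : ℕ, ∀ a ∈ B n, r a ∈ B n)
    (T1 : Set (AddMonoid.End M))
    (hT1cont : ∀ t ∈ T1, Continuous t)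
    (hT1comm : ∀ t ∈ T1, ∀ r ∈ R, ∀ a : M, t (r a) = r (t a))
    (Y : Set M)
    (P : M → M → Prop)
    (hPirr : ∀ μ, ¬ P μ μ)
    (hPtrans : ∀ μ ν ρ, P μ ν → P ν ρ → P μ ρ)
    (hcompat : ∀ t ∈ TS T1, Compatible R Y P t) :
    (∀ μ ∈ Y,
        DIS R Y P T1 μ =
          closure (AddSubgroup.closure
            {x : M | ∃ a ∈ DSM R Y P μ, ∃ t ∈ T1, x = a - t a} : Set M) ∧
        DIS R Y P T1 μ =
          closure (AddSubgroup.closure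
            {x : M | ∃ a ∈ DSM R Y P μ, ∃ t ∈ TS T1, x = a - t a} : Set M)) ∧
    (∀ μ ∈ Y, ∀ t1 ∈ T1, ∀ t2 ∈ T1, t1 μ ≠ μ → t2 μ ≠ μ →
      (∀ n : ℕ, ∃ t3 ∈ TS T1, ∃ t4 ∈ TS T1, t3 (t1 μ) - t4 (t2 μ) ∈ B n) →
      t1 μ - t2 μ ∈ DIS R Y P T1 μ) :=
  DIS_characterisation_and_relative_resolvability_general B hBbasis R hRcont T1 hT1cont hT1comm Y P
    hPtrans hcompat
end

section
/- For every a ∈ Per(S) there exists b ∈ Irr(S) such that for every ε ∈ Ô there is some t ∈ T(S) for which t(a) is stuck in the coset b + ε; moreover this a and b satisfy a − b ∈ I(S). Consequently Per(S) ⊆ I(S) + Irr(S). -/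
open Set Filter Topology Pointwise

/-!
Iterate persistent reducibility: at stage `n` apply a further `t ∈ T(S)` to the current image
of `a` so that it becomes stuck within `B n` of some irreducible `c n`. Each stage composes on
top of the previous one, so later images stay stuck near every earlier `c n`; as the `B n`
decrease, `c m - c n ∈ B n` for `n ≤ m`, and `(c n)` is Cauchy. Its limit `b` is irreducible
because the fixed-point set of continuous maps is closed, the images `s n a` converge to `b`,
and `a - b` is the limit of the elements `a - s n a` of `I(S)`.
-/

section Reduction

variable {M : Type*} [AddCommGroup M] {T1 : Set (AddMonoid.End M)}

theorem continuous_of_mem_TS [TopologicalSpace M] (hT1cont : ∀ t ∈ T1, Continuous t) {t : AddMonoid.End M}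
    (ht : t ∈ TS T1) : Continuous t := by
  induction ht using Submonoid.closure_induction with
  | mem x hx => exact hT1cont x hx
  | one => exact continuous_id
  | mul f g _ _ hf hg => exact hf.comp hg

theorem Stuck.mem {N : Set M} {a : M} (h : Stuck T1 N a) : a ∈ N :=
  h 1 (Submonoid.one_mem _)

theorem Stuck.apply {N : Set M} {a : M} (h : Stuck T1 N a) {u : AddMonoid.End M}
    (hu : u ∈ TS T1) : Stuck T1 N (u a) :=
  fun t ht => h (t * u) (Submonoid.mul_mem _ ht hu)

theorem Stuck.of_le {s : ℕ → AddMonoid.End M} (hstep : ∀ n, ∃ u ∈ TS T1, s (n + 1) = u * s n)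
    {N : Set M} {a : M} {n m : ℕ} (hnm : n ≤ m) (h : Stuck T1 N (s n a)) :
    Stuck T1 N (s m a) := by
  induction hnm with
  | refl => exact h
  | step _ ih =>
    obtain ⟨u, hu, hs⟩ := hstep _
    rw [hs]
    exact ih.apply hu

theorem exists_stuck_seq_of_mem_Per {B : ℕ → AddSubgroup M} {a : M} (ha : a ∈ Per T1 B) :
    ∃ s : ℕ → AddMonoid.End M, ∃ c : ℕ → M, (∀ n, s n ∈ TS T1) ∧ (∀ n, c n ∈ IrrS T1) ∧
      (∀ n, ∃ u ∈ TS T1, s (n + 1) = u * s n) ∧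
      ∀ n, Stuck T1 {x | x - c n ∈ (B n : Set M)} (s n a) := by
  choose! t ht c hc hstuck using fun n => mem_iInter.mp ha n
  -- `s n` is the composite of the first `n` reduction steps; the sequence used is `s (n + 1)`.
  let s : ℕ → AddMonoid.End M := fun n => Nat.rec 1 (fun k sk => t k sk * sk) n
  have hs : ∀ n, s n ∈ TS T1 := fun n =>
    Nat.rec (Submonoid.one_mem _) (fun k ih => Submonoid.mul_mem _ (ht k _ ih) ih) n
  exact ⟨fun n => s (n + 1), fun n => c n (s n), fun n => hs (n + 1), fun n => hc n _ (hs n),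
    fun n => ⟨t (n + 1) (s (n + 1)), ht _ _ (hs (n + 1)), rfl⟩, fun n => hstuck n _ (hs n)⟩

theorem isClosed_IrrS [TopologicalSpace M] [T2Space M] (hT1cont : ∀ t ∈ T1, Continuous t) :
    IsClosed (IrrS T1) := by
  have : IrrS T1 = ⋂ t ∈ TS T1, {a | t a = a} := by
    ext a
    simp only [IrrS, mem_ofPred_eq, mem_iInter]
  rw [this]
  exact isClosed_biInter fun t ht => isClosed_eq (continuous_of_mem_TS hT1cont ht) continuous_id

theorem sub_apply_mem_IS [TopologicalSpace M] {t : AddMonoid.End M} (ht : t ∈ TS T1) (a : M) :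
    a - t a ∈ IS T1 :=
  subset_closure (AddSubgroup.subset_closure ⟨a, t, ht, rfl⟩)

theorem sub_mem_IS_of_tendsto [TopologicalSpace M] [IsTopologicalAddGroup M]
    {s : ℕ → AddMonoid.End M} (hs : ∀ n, s n ∈ TS T1) {a b : M}
    (h : Tendsto (fun n => s n a) atTop (𝓝 b)) : a - b ∈ IS T1 :=
  isClosed_closure.mem_of_tendsto (tendsto_const_nhds.sub h)
    (Eventually.of_forall fun n => sub_apply_mem_IS (hs n) a)

end Reduction

section SubgroupBasis

variable {M : Type*} [AddCommGroup M] [UniformSpace M] [IsUniformAddGroup M]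
  {B : ℕ → AddSubgroup M}

theorem cauchySeq_of_sub_mem (hB : (𝓝 (0 : M)).HasBasis (fun _ => True) fun n => (B n : Set M))
    {x : ℕ → M} (h : ∀ n m, n ≤ m → x m - x n ∈ B n) : CauchySeq x := by
  rw [hB.uniformity_of_nhds_zero.cauchySeq_iff]
  exact fun n _ => ⟨n, fun m hm k hk => by simpa using sub_mem (h n k hk) (h n m hm)⟩

theorem sub_mem_of_tendsto (hB : (𝓝 (0 : M)).HasBasis (fun _ => True) fun n => (B n : Set M))
    {x : ℕ → M} {b : M} (hx : Tendsto x atTop (𝓝 b)) {n : ℕ}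
    (h : ∀ m, n ≤ m → x m - x n ∈ B n) : b - x n ∈ B n := by
  have hlim : Tendsto (fun m => b - x m) atTop (𝓝 0) := by
    simpa using hx.const_sub b
  obtain ⟨m, hnm, hm⟩ :=
    ((eventually_ge_atTop n).and (hlim.eventually (hB.mem_of_mem trivial))).exists
  simpa using add_mem hm (h m hnm)

theorem tendsto_of_sub_mem (hB : (𝓝 (0 : M)).HasAntitoneBasis fun n => (B n : Set M))
    {x : ℕ → M} {b : M} (h : ∀ n, x n - b ∈ B n) : Tendsto x atTop (𝓝 b) :=
  tendsto_sub_nhds_zero_iff.mp (hB.tendsto h)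

theorem exists_irr_stuck_of_mem_Per [CompleteSpace M] [T2Space M]
    (hB : (𝓝 (0 : M)).HasAntitoneBasis fun n => (B n : Set M)) {T1 : Set (AddMonoid.End M)}
    (hT1cont : ∀ t ∈ T1, Continuous t) {a : M} (ha : a ∈ Per T1 B) :
    ∃ b ∈ IrrS T1, (∀ n : ℕ, ∃ t ∈ TS T1, Stuck T1 {x | x - b ∈ (B n : Set M)} (t a)) ∧
      a - b ∈ IS T1 := by
  obtain ⟨s, c, hs, hc, hstep, hstuck⟩ := exists_stuck_seq_of_mem_Per ha
  have hc_sub : ∀ n m, n ≤ m → c m - c n ∈ B n := fun n m hnm => by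
    have hn : s m a - c n ∈ B n := ((hstuck n).of_le hstep hnm).mem
    have hm : s m a - c m ∈ B n := hB.antitone hnm (hstuck m).mem
    simpa using sub_mem hn hm
  obtain ⟨b, hb⟩ := cauchySeq_tendsto_of_complete (cauchySeq_of_sub_mem hB.toHasBasis hc_sub)
  have hbc : ∀ n, b - c n ∈ B n := fun n => sub_mem_of_tendsto hB.toHasBasis hb (hc_sub n)
  have hstuck_b : ∀ n, Stuck T1 {x | x - b ∈ (B n : Set M)} (s n a) := fun n t ht => by
    simpa using sub_mem (hstuck n t ht) (hbc n)
  refine ⟨b, (isClosed_IrrS hT1cont).mem_of_tendsto hb (.of_forall hc),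
    fun n => ⟨s n, hs n, hstuck_b n⟩, sub_mem_IS_of_tendsto hs ?_⟩
  exact tendsto_of_sub_mem hB fun n => (hstuck_b n).mem

end SubgroupBasis

theorem persistently_reducible_near_normal_form_general
    {M : Type*} [AddCommGroup M] [UniformSpace M] [IsUniformAddGroup M]
    [CompleteSpace M] [T2Space M]
    (B : ℕ → AddSubgroup M)
    (hBanti : ∀ n, (B (n + 1) : Set M) ⊆ (B n : Set M))
    (hBbasis : (nhds (0 : M)).HasBasis (fun _ : ℕ => True) (fun n => (B n : Set M)))
    (T1 : Set (AddMonoid.End M))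
    (hT1cont : ∀ t ∈ T1, Continuous t) :
    (∀ a ∈ Per T1 B, ∃ b ∈ IrrS T1,
        (∀ n : ℕ, ∃ t ∈ TS T1, Stuck T1 {x | x - b ∈ (B n : Set M)} (t a)) ∧
        a - b ∈ IS T1) ∧
    Per T1 B ⊆ IS T1 + IrrS T1 := by
  have hB : (𝓝 (0 : M)).HasAntitoneBasis fun n => (B n : Set M) :=
    ⟨hBbasis, antitone_nat_of_succ_le hBanti⟩
  have main := fun a (ha : a ∈ Per T1 B) => exists_irr_stuck_of_mem_Per hB hT1cont ha
  refine ⟨main, fun a ha => ?_⟩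
  obtain ⟨b, hb, -, hab⟩ := main a ha
  exact ⟨a - b, hab, b, hb, sub_add_cancel a b⟩

theorem persistently_reducible_near_normal_form
    {M : Type*} [AddCommGroup M] [UniformSpace M] [IsUniformAddGroup M]
    [CompleteSpace M] [T2Space M]
    (B : ℕ → AddSubgroup M)
    (hBopen : ∀ n, IsOpen (B n : Set M))
    (hBanti : ∀ n, (B (n + 1) : Set M) ⊆ (B n : Set M))
    (hBbasis : (nhds (0 : M)).HasBasis (fun _ : ℕ => True) (fun n => (B n : Set M)))
    (hBsep : ⋂ n, (B n : Set M) = {0})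
    (R : Set (AddMonoid.End M))
    (hRcont : ∀ r ∈ R, Continuous r)
    (hRsmall : ∀ r ∈ R, ∀ n : ℕ, ∀ a ∈ B n, r a ∈ B n)
    (T1 : Set (AddMonoid.End M))
    (hT1cont : ∀ t ∈ T1, Continuous t)
    (hT1comm : ∀ t ∈ T1, ∀ r ∈ R, ∀ a : M, t (r a) = r (t a)) :
    (∀ a ∈ Per T1 B, ∃ b ∈ IrrS T1,
        (∀ n : ℕ, ∃ t ∈ TS T1, Stuck T1 {x | x - b ∈ (B n : Set M)} (t a)) ∧
        a - b ∈ IS T1) ∧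
    Per T1 B ⊆ IS T1 + IrrS T1 :=
  persistently_reducible_near_normal_form_general B hBanti hBbasis T1 hT1cont
end

section
/- If T(S) is equicontinuous, then the map t^S : Red(S) → Irr(S) is continuous, and the sets Per(S), Red(S) and, for every ε ∈ Ô, the sets Per_ε(S) and Red_ε(S) are topologically closed in M̄. -/
open Set Filter Topology Pointwise

/-!
By equicontinuity, for every `ε` there is a neighbourhood `δ` of `0` such that moving `a` by an
element of `δ` moves every `t a`, `t ∈ T(S)`, by an element of `ε`. Hence being stuck in a coset
`b + ε`, and with it persistent `ε`-reducibility and `ε`-unique reducibility, is invariant under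
`δ`-perturbations; a set invariant under perturbations from a neighbourhood of `0` is closed. The
same transfer compares the normal forms of nearby points of `Red(S)`, giving continuity of `t^S`.
-/

section Perturbation

variable {M : Type*} [AddCommGroup M] {T1 : Set (AddMonoid.End M)} {δ ε : AddSubgroup M}

theorem stuck_of_sub_mem (hδε : ∀ t ∈ TS T1, MapsTo t δ ε) {a a' b : M} (had : a' - a ∈ δ)
    {t₀ : AddMonoid.End M} (ht₀ : t₀ ∈ TS T1) (h : Stuck T1 {x | x - b ∈ ε} (t₀ a')) :
    Stuck T1 {x | x - b ∈ ε} (t₀ a) := by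
  intro t ht
  have hshift : (t * t₀) (a' - a) ∈ ε := hδε _ (Submonoid.mul_mem _ ht ht₀) had
  have hsplit : t (t₀ a) - b = (t (t₀ a') - b) - (t * t₀) (a' - a) := by
    rw [AddMonoid.End.coe_mul, Function.comp_apply, map_sub, map_sub]
    abel
  show t (t₀ a) - b ∈ ε
  rw [hsplit]
  exact sub_mem (h t ht) hshift

theorem mem_perE_of_sub_mem (hδε : ∀ t ∈ TS T1, MapsTo t δ ε) {a a' : M}
    (ha' : a' ∈ PerE T1 ε) (had : a' - a ∈ δ) : a ∈ PerE T1 ε := by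
  intro t₁ ht₁
  obtain ⟨t₂, ht₂, b, hb, hstuck⟩ := ha' t₁ ht₁
  exact ⟨t₂, ht₂, b, hb, stuck_of_sub_mem hδε had (Submonoid.mul_mem _ ht₂ ht₁) hstuck⟩

theorem mem_uniqE_of_sub_mem (hδε : ∀ t ∈ TS T1, MapsTo t δ ε) {a a' : M}
    (ha' : a' ∈ UniqE T1 ε) (had : a' - a ∈ δ) : a ∈ UniqE T1 ε := by
  intro t₁ ht₁ t₂ ht₂ b₁ hb₁ b₂ hb₂ hs₁ hs₂
  have hda : a - a' ∈ δ := δ.sub_mem_comm_iff.mp had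
  exact ha' t₁ ht₁ t₂ ht₂ b₁ hb₁ b₂ hb₂
    (stuck_of_sub_mem hδε hda ht₁ hs₁) (stuck_of_sub_mem hδε hda ht₂ hs₂)

theorem sub_mem_of_mem_uniqE (hδε : ∀ t ∈ TS T1, MapsTo t δ ε) {a x bₐ bₓ : M}
    (ha : a ∈ UniqE T1 ε) (hxa : x - a ∈ δ) (hbₐ : bₐ ∈ IrrS T1) (hbₓ : bₓ ∈ IrrS T1)
    (hsₐ : ∃ t ∈ TS T1, Stuck T1 {y | y - bₐ ∈ ε} (t a))
    (hsₓ : ∃ t ∈ TS T1, Stuck T1 {y | y - bₓ ∈ ε} (t x)) : bₓ - bₐ ∈ ε := by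
  obtain ⟨tₐ, htₐ, hstuckₐ⟩ := hsₐ
  obtain ⟨tₓ, htₓ, hstuckₓ⟩ := hsₓ
  exact ε.sub_mem_comm_iff.mp
    (ha tₐ htₐ tₓ htₓ bₐ hbₐ bₓ hbₓ hstuckₐ (stuck_of_sub_mem hδε hxa htₓ hstuckₓ))

end Perturbation

section Topology

variable {M : Type*} [AddCommGroup M] [TopologicalSpace M] [IsTopologicalAddGroup M]

theorem setOf_sub_mem_mem_nhds {δ : Set M} (hδ : δ ∈ 𝓝 0) (a : M) :
    {x | x - a ∈ δ} ∈ 𝓝 a :=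
  (continuous_sub_right a).tendsto' a 0 (sub_self a) hδ

theorem isClosed_of_sub_mem_imp {S δ : Set M} (hδ : δ ∈ 𝓝 0)
    (hS : ∀ a a', a' ∈ S → a' - a ∈ δ → a ∈ S) : IsClosed S := by
  refine isClosed_of_closure_subset fun a ha => ?_
  obtain ⟨a', had, ha'⟩ := mem_closure_iff_nhds.mp ha _ (setOf_sub_mem_mem_nhds hδ a)
  exact hS a a' ha' had

variable {T1 : Set (AddMonoid.End M)} {δ ε : AddSubgroup M}

theorem isClosed_perE (hδ : (δ : Set M) ∈ 𝓝 0) (hδε : ∀ t ∈ TS T1, MapsTo t δ ε) :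
    IsClosed (PerE T1 ε) :=
  isClosed_of_sub_mem_imp hδ fun _ _ ha' had => mem_perE_of_sub_mem hδε ha' had

theorem isClosed_uniqE (hδ : (δ : Set M) ∈ 𝓝 0) (hδε : ∀ t ∈ TS T1, MapsTo t δ ε) :
    IsClosed (UniqE T1 ε) :=
  isClosed_of_sub_mem_imp hδ fun _ _ ha' had => mem_uniqE_of_sub_mem hδε ha' had

theorem continuousOn_red_of_stuck {B : ℕ → AddSubgroup M}
    (hB : (𝓝 (0 : M)).HasBasis (fun _ : ℕ => True) (fun n => (B n : Set M)))
    (hequi : Equicont T1 B) {tS : M → M}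
    (htS : ∀ a ∈ Red T1 B, tS a ∈ IrrS T1 ∧
      ∀ n : ℕ, ∃ t ∈ TS T1, Stuck T1 {x | x - tS a ∈ (B n : Set M)} (t a)) :
    ContinuousOn tS (Red T1 B) := by
  intro a ha
  rw [ContinuousWithinAt, ← tendsto_sub_nhds_zero_iff, hB.tendsto_right_iff]
  intro n _
  obtain ⟨m, hm⟩ := hequi n
  have haUniq : a ∈ UniqE T1 (B n) := (mem_iInter.mp ha n).2
  filter_upwards [mem_nhdsWithin_of_mem_nhds (setOf_sub_mem_mem_nhds (hB.mem_of_mem trivial) a),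
    self_mem_nhdsWithin] with x hxa hx
  exact sub_mem_of_mem_uniqE hm haUniq hxa (htS a ha).1 (htS x hx).1 ((htS a ha).2 n)
    ((htS x hx).2 n)

end Topology

theorem equicontinuous_closedness_general
    {M : Type*} [AddCommGroup M] [UniformSpace M] [IsUniformAddGroup M]
    (B : ℕ → AddSubgroup M)
    (hBbasis : (nhds (0 : M)).HasBasis (fun _ : ℕ => True) (fun n => (B n : Set M)))
    (T1 : Set (AddMonoid.End M))
    (hequi : Equicont T1 B) :
    (∀ tS : M → M,
      (∀ a ∈ Red T1 B, tS a ∈ IrrS T1 ∧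
        ∀ n : ℕ, ∃ t ∈ TS T1, Stuck T1 {x | x - tS a ∈ (B n : Set M)} (t a)) →
      ContinuousOn tS (Red T1 B)) ∧
    IsClosed (Per T1 B) ∧
    IsClosed (Red T1 B) ∧
    (∀ n : ℕ, IsClosed (PerE T1 (B n))) ∧
    (∀ n : ℕ, IsClosed (RedE T1 B (B n))) := by
  have hPerE (n : ℕ) : IsClosed (PerE T1 (B n)) := by
    obtain ⟨m, hm⟩ := hequi n
    exact isClosed_perE (hBbasis.mem_of_mem trivial) hm
  have hPer : IsClosed (Per T1 B) := isClosed_iInter hPerE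
  have hRedE (n : ℕ) : IsClosed (RedE T1 B (B n)) := by
    obtain ⟨m, hm⟩ := hequi n
    exact hPer.inter (isClosed_uniqE (hBbasis.mem_of_mem trivial) hm)
  exact ⟨fun _ htS => continuousOn_red_of_stuck hBbasis hequi htS, hPer, isClosed_iInter hRedE,
    hPerE, hRedE⟩

theorem equicontinuous_closedness
    {M : Type*} [AddCommGroup M] [UniformSpace M] [IsUniformAddGroup M]
    [CompleteSpace M] [T2Space M]
    (B : ℕ → AddSubgroup M)
    (hBopen : ∀ n, IsOpen (B n : Set M))
    (hBanti : ∀ n, (B (n + 1) : Set M) ⊆ (B n : Set M))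
    (hBbasis : (nhds (0 : M)).HasBasis (fun _ : ℕ => True) (fun n => (B n : Set M)))
    (hBsep : ⋂ n, (B n : Set M) = {0})
    (R : Set (AddMonoid.End M))
    (hRcont : ∀ r ∈ R, Continuous r)
    (hRsmall : ∀ r ∈ R, ∀ n : ℕ, ∀ a ∈ B n, r a ∈ B n)
    (T1 : Set (AddMonoid.End M))
    (hT1cont : ∀ t ∈ T1, Continuous t)
    (hT1comm : ∀ t ∈ T1, ∀ r ∈ R, ∀ a : M, t (r a) = r (t a))
    (hequi : Equicont T1 B) :
    (∀ tS : M → M,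
      (∀ a ∈ Red T1 B, tS a ∈ IrrS T1 ∧
        ∀ n : ℕ, ∃ t ∈ TS T1, Stuck T1 {x | x - tS a ∈ (B n : Set M)} (t a)) →
      ContinuousOn tS (Red T1 B)) ∧
    IsClosed (Per T1 B) ∧
    IsClosed (Red T1 B) ∧
    (∀ n : ℕ, IsClosed (PerE T1 (B n))) ∧
    (∀ n : ℕ, IsClosed (RedE T1 B (B n))) :=
  equicontinuous_closedness_general B hBbasis T1 hequi
end

section
/- Let T1(S') ⊆ T1(S), and define T(S'), Irr(S'), Per(S'), Red(S') and t^{S'} from T1(S') exactly as the corresponding objects T(S), Irr(S), Per(S), Red(S) and t^S are defined from T1(S). If Irr(S') = Irr(S), Per(S') = M̄, Red(S) = M̄ and T(S) is equicontinuous, then Red(S') = M̄ as well and t^{S'} = t^S. -/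
open Set Filter Topology Pointwise

/-!
Fix levels `δ ⊆ ε` of the filtration with `t(δ) ⊆ ε` for all `t ∈ T(S)`. If an irreducible `b'`
is `δ`-close to some reduct `t' a`, reduce `t' a` further by `w` until it is stuck near some
irreducible `d`: since `w` fixes `b'`, equicontinuity keeps `w (t' a)` `ε`-close to `b'`, and
`ε`-unique reducibility for `S` makes `d` `ε`-close to every `b` in which a reduct of `a` is stuck.
Hence all irreducibles that are `δ`-close to reducts of `a` are mutually `ε`-close. `S'`-persistence
at level `δ` produces such irreducibles for every `S'`-reduct, and `Irr(S') = Irr(S)`, so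
`ε`-unique reducibility, and with it the value of the normal form, passes from `S` to `S'`.
-/

section

variable {M : Type*} [AddCommGroup M]

theorem one_mem_TS (T : Set (AddMonoid.End M)) : (1 : AddMonoid.End M) ∈ TS T :=
  (Submonoid.closure T).one_mem

theorem mul_mem_TS {T : Set (AddMonoid.End M)} {s t : AddMonoid.End M}
    (hs : s ∈ TS T) (ht : t ∈ TS T) : s * t ∈ TS T :=
  (Submonoid.closure T).mul_mem hs ht

theorem TS_mono {T T' : Set (AddMonoid.End M)} (h : T' ⊆ T) : TS T' ⊆ TS T :=
  Submonoid.closure_mono h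

theorem Stuck.mem_self {T : Set (AddMonoid.End M)} {N : Set M} {a : M} (h : Stuck T N a) :
    a ∈ N :=
  h 1 (one_mem_TS T)

theorem Stuck.sub_mem_of_apply_sub_mem {T : Set (AddMonoid.End M)} {ε : AddSubgroup M}
    {b x c : M} (hs : Stuck T {y | y - b ∈ (ε : Set M)} x) {u : AddMonoid.End M}
    (hu : u ∈ TS T) (hc : u x - c ∈ ε) : b - c ∈ ε := by
  rw [← sub_sub_sub_cancel_left c b (u x)]
  exact sub_mem hc (hs u hu)

theorem mem_PerE_and_mem_UniqE_of_mem_Red {T : Set (AddMonoid.End M)} {B : ℕ → AddSubgroup M}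
    {a : M} (h : a ∈ Red T B) (n : ℕ) : a ∈ PerE T (B n) ∧ a ∈ UniqE T (B n) :=
  have h' := mem_iInter.1 h n
  ⟨mem_iInter.1 h'.1 n, h'.2⟩

variable {T : Set (AddMonoid.End M)} {ε δ : AddSubgroup M} {a : M}

theorem sub_mem_of_reduct_sub_mem_of_stuck (hPer : a ∈ PerE T ε) (hUniq : a ∈ UniqE T ε)
    (hδ : ∀ t ∈ TS T, ∀ x ∈ δ, t x ∈ ε) {t' : AddMonoid.End M} (ht' : t' ∈ TS T) {b' : M}
    (hb' : b' ∈ IrrS T) (hclose : t' a - b' ∈ δ) {t : AddMonoid.End M} (ht : t ∈ TS T) {b : M}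
    (hb : b ∈ IrrS T) (hstuck : Stuck T {x | x - b ∈ (ε : Set M)} (t a)) : b' - b ∈ ε := by
  obtain ⟨w, hw, d, hd, hwd⟩ := hPer t' ht'
  have hb'd : b' - d ∈ ε := by
    have hwb' : w (t' a) - b' ∈ ε := by
      simpa only [map_sub, hb' w hw] using hδ w hw _ hclose
    exact sub_mem_comm_iff.1 (hwd.sub_mem_of_apply_sub_mem (one_mem_TS T) hwb')
  have hdb : d - b ∈ ε := hUniq (w * t') (mul_mem_TS hw ht') t ht d hd b hb hwd hstuck
  rw [← sub_add_sub_cancel b' d b]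
  exact add_mem hb'd hdb

theorem sub_mem_of_reducts_sub_mem (hPer : a ∈ PerE T ε) (hUniq : a ∈ UniqE T ε)
    (hδ : ∀ t ∈ TS T, ∀ x ∈ δ, t x ∈ ε) {t₁ t₂ : AddMonoid.End M} (ht₁ : t₁ ∈ TS T)
    (ht₂ : t₂ ∈ TS T) {b₁ b₂ : M} (hb₁ : b₁ ∈ IrrS T) (hb₂ : b₂ ∈ IrrS T)
    (h₁ : t₁ a - b₁ ∈ δ) (h₂ : t₂ a - b₂ ∈ δ) : b₁ - b₂ ∈ ε := by
  obtain ⟨w, hw, e, he, hwe⟩ := hPer 1 (one_mem_TS T)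
  rw [← sub_sub_sub_cancel_right b₁ b₂ e]
  exact sub_mem
    (sub_mem_of_reduct_sub_mem_of_stuck hPer hUniq hδ ht₁ hb₁ h₁ hw he hwe)
    (sub_mem_of_reduct_sub_mem_of_stuck hPer hUniq hδ ht₂ hb₂ h₂ hw he hwe)

theorem mem_UniqE_of_subset {T' : Set (AddMonoid.End M)} (hsub : T' ⊆ T)
    (hIrr : IrrS T' = IrrS T) (hPer : a ∈ PerE T ε) (hUniq : a ∈ UniqE T ε)
    (hPer' : a ∈ PerE T' δ) (hδ : ∀ t ∈ TS T, ∀ x ∈ δ, t x ∈ ε) : a ∈ UniqE T' ε := by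
  have near_reduct : ∀ t ∈ TS T', ∀ b : M, Stuck T' {x | x - b ∈ (ε : Set M)} (t a) →
      ∃ s ∈ TS T, ∃ c ∈ IrrS T, s a - c ∈ δ ∧ b - c ∈ ε := by
    intro t ht b hb
    obtain ⟨u, hu, c, hc, huc⟩ := hPer' t ht
    have hclose : u (t a) - c ∈ δ := huc.mem_self
    exact ⟨u * t, TS_mono hsub (mul_mem_TS hu ht), c, hIrr ▸ hc, hclose,
      hb.sub_mem_of_apply_sub_mem hu (hδ 1 (one_mem_TS T) _ hclose)⟩
  intro t₁ ht₁ t₂ ht₂ b₁ _ b₂ _ hstuck₁ hstuck₂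
  obtain ⟨s₁, hs₁, c₁, hc₁, h₁, hb₁c₁⟩ := near_reduct t₁ ht₁ b₁ hstuck₁
  obtain ⟨s₂, hs₂, c₂, hc₂, h₂, hb₂c₂⟩ := near_reduct t₂ ht₂ b₂ hstuck₂
  have hc₁c₂ := sub_mem_of_reducts_sub_mem hPer hUniq hδ hs₁ hs₂ hc₁ hc₂ h₁ h₂
  have hsplit : b₁ - b₂ = (b₁ - c₁) + (c₁ - c₂) - (b₂ - c₂) := by abel
  rw [hsplit]
  exact sub_mem (add_mem hb₁c₁ hc₁c₂) hb₂c₂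

end

theorem dropping_redundant_reductions_general
    {M : Type*} [AddCommGroup M]
    (B : ℕ → AddSubgroup M)
    (hBsep : ⋂ n, (B n : Set M) = {0})
    (T1 T1' : Set (AddMonoid.End M))
    (hsub : T1' ⊆ T1)
    (hIrr : IrrS T1' = IrrS T1)
    (hPer' : Per T1' B = Set.univ)
    (hRed : Red T1 B = Set.univ)
    (hequi : Equicont T1 B) :
    Red T1' B = Set.univ ∧
    ∀ tS tS' : M → M,
      (∀ a : M, tS a ∈ IrrS T1 ∧
        ∀ n : ℕ, ∃ t ∈ TS T1, Stuck T1 {x | x - tS a ∈ (B n : Set M)} (t a)) →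
      (∀ a : M, tS' a ∈ IrrS T1' ∧
        ∀ n : ℕ, ∃ t ∈ TS T1', Stuck T1' {x | x - tS' a ∈ (B n : Set M)} (t a)) →
      tS' = tS := by
  have hRedS (a : M) (n : ℕ) := mem_PerE_and_mem_UniqE_of_mem_Red (hRed ▸ mem_univ a) n
  have hPerS' (a : M) : a ∈ Per T1' B := hPer' ▸ mem_univ a
  refine ⟨eq_univ_of_forall fun a => mem_iInter.2 fun n => ⟨hPerS' a, ?_⟩,
    fun tS tS' htS htS' => funext fun a => ?_⟩
  · obtain ⟨m, hm⟩ := hequi n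
    exact mem_UniqE_of_subset hsub hIrr (hRedS a n).1 (hRedS a n).2 (mem_iInter.1 (hPerS' a) m) hm
  · rw [← sub_eq_zero, ← mem_singleton_iff, ← hBsep, mem_iInter]
    intro n
    obtain ⟨m, hm⟩ := hequi n
    obtain ⟨t', ht', hst'⟩ := (htS' a).2 m
    obtain ⟨t, ht, hst⟩ := (htS a).2 m
    exact sub_mem_of_reducts_sub_mem (hRedS a n).1 (hRedS a n).2 hm (TS_mono hsub ht') ht
      (hIrr ▸ (htS' a).1) (htS a).1 hst'.mem_self hst.mem_self

theorem dropping_redundant_reductions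
    {M : Type*} [AddCommGroup M] [UniformSpace M] [IsUniformAddGroup M]
    [CompleteSpace M] [T2Space M]
    (B : ℕ → AddSubgroup M)
    (hBopen : ∀ n, IsOpen (B n : Set M))
    (hBanti : ∀ n, (B (n + 1) : Set M) ⊆ (B n : Set M))
    (hBbasis : (nhds (0 : M)).HasBasis (fun _ : ℕ => True) (fun n => (B n : Set M)))
    (hBsep : ⋂ n, (B n : Set M) = {0})
    (R : Set (AddMonoid.End M))
    (hRcont : ∀ r ∈ R, Continuous r)
    (hRsmall : ∀ r ∈ R, ∀ n : ℕ, ∀ a ∈ B n, r a ∈ B n)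
    (T1 T1' : Set (AddMonoid.End M))
    (hT1cont : ∀ t ∈ T1, Continuous t)
    (hT1comm : ∀ t ∈ T1, ∀ r ∈ R, ∀ a : M, t (r a) = r (t a))
    (hsub : T1' ⊆ T1)
    (hIrr : IrrS T1' = IrrS T1)
    (hPer' : Per T1' B = Set.univ)
    (hRed : Red T1 B = Set.univ)
    (hequi : Equicont T1 B) :
    Red T1' B = Set.univ ∧
    ∀ tS tS' : M → M,
      (∀ a : M, tS a ∈ IrrS T1 ∧
        ∀ n : ℕ, ∃ t ∈ TS T1, Stuck T1 {x | x - tS a ∈ (B n : Set M)} (t a)) →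
      (∀ a : M, tS' a ∈ IrrS T1' ∧
        ∀ n : ℕ, ∃ t ∈ TS T1', Stuck T1' {x | x - tS' a ∈ (B n : Set M)} (t a)) →
      tS' = tS :=
  dropping_redundant_reductions_general B hBsep T1 T1' hsub hIrr hPer' hRed hequi
end

section
/- Induction principle over Y: Let P be a partial order on Y that satisfies the topological descending chain condition. If Z ⊆ Y is such that (i) there exists ε ∈ Ô with ε ∩ Y ⊆ Z, and (ii) for every μ ∈ Y, if every ν ∈ Y with ν < μ in P belongs to Z then μ ∈ Z, then Z = Y. -/
open Set Filter Topology

/-!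
Restricted to `Y \ Z`, the order `P` is well-founded: an infinite descending chain in `Y`
tends to `0` by the TDCC, so it eventually enters `ε ∩ Y ⊆ Z`. Well-founded induction with
hypothesis (ii) then gives `Y ⊆ Z`.
-/

section ChainInduction

variable {α : Type*} {Y Z : Set α} {r : α → α → Prop}

theorem wellFounded_rel_of_chains_meet
    (hchain : ∀ f : ℕ → α, (∀ n, f n ∈ Y) → (∀ n, r (f (n + 1)) (f n)) → ∃ n, f n ∈ Z) :
    WellFounded fun ν μ => (ν ∈ Y ∧ ν ∉ Z) ∧ r ν μ := by
  refine wellFounded_iff_isEmpty_descending_chain.mpr ⟨fun ⟨f, hf⟩ => ?_⟩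
  obtain ⟨n, hn⟩ := hchain (fun n => f (n + 1)) (fun n => (hf n).1.1) (fun n => (hf (n + 1)).2)
  exact (hf n).1.2 hn

theorem subset_of_chains_meet
    (hchain : ∀ f : ℕ → α, (∀ n, f n ∈ Y) → (∀ n, r (f (n + 1)) (f n)) → ∃ n, f n ∈ Z)
    (hstep : ∀ μ ∈ Y, (∀ ν ∈ Y, r ν μ → ν ∈ Z) → μ ∈ Z) :
    Y ⊆ Z := by
  intro μ
  induction μ using (wellFounded_rel_of_chains_meet hchain).induction with
  | _ μ ih =>
    intro hμ
    refine hstep μ hμ fun ν hν hνμ => ?_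
    by_contra hνZ
    exact hνZ (ih ν ⟨⟨hν, hνZ⟩, hνμ⟩ hν)

end ChainInduction

theorem TDCC.exists_mem_inter {M : Type*} [AddCommGroup M] [TopologicalSpace M]
    {Y : Set M} {P : M → M → Prop} (h : TDCC Y P) {U : Set M} (hU : U ∈ 𝓝 0)
    (f : ℕ → M) (hfY : ∀ n, f n ∈ Y) (hf : ∀ n, P (f (n + 1)) (f n)) :
    ∃ n, f n ∈ U ∩ Y :=
  let ⟨n, hn⟩ := ((h f hfY hf).eventually_mem hU).exists
  ⟨n, hn, hfY n⟩

theorem induction_over_Y_general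
    {M : Type*} [AddCommGroup M] [TopologicalSpace M]
    (B : ℕ → AddSubgroup M)
    (hBbasis : (nhds (0 : M)).HasBasis (fun _ : ℕ => True) (fun n => (B n : Set M)))
    (Y : Set M)
    (P : M → M → Prop)
    (hTDCC : TDCC Y P)
    (Z : Set M) (hZY : Z ⊆ Y)
    (hbase : ∃ n : ℕ, (B n : Set M) ∩ Y ⊆ Z)
    (hstep : ∀ μ ∈ Y, (∀ ν ∈ Y, P ν μ → ν ∈ Z) → μ ∈ Z) :
    Z = Y := by
  obtain ⟨n, hn⟩ := hbase
  refine hZY.antisymm (subset_of_chains_meet (fun f hfY hf => ?_) hstep)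
  obtain ⟨k, hk⟩ := hTDCC.exists_mem_inter (hBbasis.mem_of_mem trivial) f hfY hf
  exact ⟨k, hn hk⟩

theorem induction_over_Y
    {M : Type*} [AddCommGroup M] [TopologicalSpace M] [IsTopologicalAddGroup M]
    [T2Space M]
    (B : ℕ → AddSubgroup M)
    (hBopen : ∀ n, IsOpen (B n : Set M))
    (hBanti : ∀ n, (B (n + 1) : Set M) ⊆ (B n : Set M))
    (hBbasis : (nhds (0 : M)).HasBasis (fun _ : ℕ => True) (fun n => (B n : Set M)))
    (hBsep : ⋂ n, (B n : Set M) = {0})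
    (Y : Set M)
    (P : M → M → Prop)
    (hPirr : ∀ μ, ¬ P μ μ)
    (hPtrans : ∀ μ ν ρ, P μ ν → P ν ρ → P μ ρ)
    (hTDCC : TDCC Y P)
    (Z : Set M) (hZY : Z ⊆ Y)
    (hbase : ∃ n : ℕ, (B n : Set M) ∩ Y ⊆ Z)
    (hstep : ∀ μ ∈ Y, (∀ ν ∈ Y, P ν μ → ν ∈ Z) → μ ∈ Z) :
    Z = Y :=
  induction_over_Y_general B hBbasis Y P hTDCC Z hZY hbase hstep
end

section
/- If an ambiguity (t₁',μ',t₂') of T1(S)(i') is resolvable, then every ambiguity (t₁,μ,t₂) of T1(S)(i) that is an absolute shadow of (t₁',μ',t₂') is resolvable as well. -/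
/-!
Resolvability of `(t₁, μ, t₂)` says that `0` lies in the closure of the differences
`t₃ (t₁ μ) - t₄ (t₂ μ)` with `t₃, t₄ ∈ T(S)`. A continuous homomorphism `v` maps closures into
closures and fixes `0`, and absolute advanceability makes `v` carry the differences for
`(t₁', μ', t₂')` into those for `(t₁, μ, t₂)`.
-/

open Set Filter Topology

def IsAbsolutelyAdvanceable {M' M : Type*} [AddCommGroup M'] [AddCommGroup M]
    (T1' : Set (AddMonoid.End M')) (T1 : Set (AddMonoid.End M)) (v : M' →+ M) : Prop :=
  ∀ t' ∈ TS T1', ∃ t ∈ TS T1, ∀ a, v (t' a) = t (v a)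

def joinDifferences {M : Type*} [AddCommGroup M] (T1 : Set (AddMonoid.End M)) (x y : M) :
    Set M :=
  image2 (fun t3 t4 : AddMonoid.End M => t3 x - t4 y) (TS T1) (TS T1)

theorem zero_mem_closure_joinDifferences_iff {M ι : Type*} [AddCommGroup M] [TopologicalSpace M]
    {T1 : Set (AddMonoid.End M)} {s : ι → Set M} (hs : (𝓝 (0 : M)).HasBasis (fun _ => True) s)
    (x y : M) :
    (0 : M) ∈ closure (joinDifferences T1 x y) ↔
      ∀ n, ∃ t3 ∈ TS T1, ∃ t4 ∈ TS T1, t3 x - t4 y ∈ s n := by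
  simp [mem_closure_iff_nhds_basis hs, joinDifferences]

namespace IsAbsolutelyAdvanceable

variable {M' M : Type*} [AddCommGroup M'] [AddCommGroup M]
  {T1' : Set (AddMonoid.End M')} {T1 : Set (AddMonoid.End M)} {v : M' →+ M}

theorem image_joinDifferences_subset (hv : IsAbsolutelyAdvanceable T1' T1 v) (x y : M') :
    v '' joinDifferences T1' x y ⊆ joinDifferences T1 (v x) (v y) := by
  rintro _ ⟨_, ⟨t3', ht3', t4', ht4', rfl⟩, rfl⟩
  obtain ⟨t3, ht3, hv3⟩ := hv t3' ht3'
  obtain ⟨t4, ht4, hv4⟩ := hv t4' ht4'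
  exact ⟨t3, ht3, t4, ht4, by simp only [map_sub, hv3, hv4]⟩

theorem zero_mem_closure_joinDifferences [TopologicalSpace M'] [TopologicalSpace M]
    (hv : IsAbsolutelyAdvanceable T1' T1 v) (hvcont : Continuous v) {x y : M'}
    (h : (0 : M') ∈ closure (joinDifferences T1' x y)) :
    (0 : M) ∈ closure (joinDifferences T1 (v x) (v y)) :=
  map_zero v ▸ closure_mono (hv.image_joinDifferences_subset x y)
    (mem_closure_image hvcont.continuousAt h)

end IsAbsolutelyAdvanceable

theorem absolute_shadow_of_resolvable_ambiguity_general
    {I : Type*} {M : I → Type*}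
    [∀ i, AddCommGroup (M i)] [∀ i, UniformSpace (M i)]
    (B : ∀ i, ℕ → AddSubgroup (M i))
    (hBbasis : ∀ i, (nhds (0 : M i)).HasBasis (fun _ : ℕ => True)
      (fun n => (B i n : Set (M i))))
    (T1 : ∀ i, Set (AddMonoid.End (M i)))
    -- the resolvable ambiguity (t₁',μ',t₂') of T1(S)(i')
    (i i' : I)
    (t1' t2' : AddMonoid.End (M i')) (μ' : M i')
    (hres' : ∀ n : ℕ, ∃ t3 ∈ TS (T1 i'), ∃ t4 ∈ TS (T1 i'),
      t3 (t1' μ') - t4 (t2' μ') ∈ B i' n)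
    -- the ambiguity (t₁,μ,t₂) of T1(S)(i), an absolute shadow of the former via v
    (t1 t2 : AddMonoid.End (M i)) (μ : M i)
    (v : M i' →+ M i) (hvcont : Continuous v)
    (hvadv : ∀ t' ∈ TS (T1 i'), ∃ t ∈ TS (T1 i), ∀ a : M i', v (t' a) = t (v a))
    (ht1v : t1 μ = v (t1' μ')) (ht2v : t2 μ = v (t2' μ')) :
    ∀ n : ℕ, ∃ t3 ∈ TS (T1 i), ∃ t4 ∈ TS (T1 i),
      t3 (t1 μ) - t4 (t2 μ) ∈ B i n := by
  have hv : IsAbsolutelyAdvanceable (T1 i') (T1 i) v := hvadv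
  have hshadow := hv.zero_mem_closure_joinDifferences hvcont
    ((zero_mem_closure_joinDifferences_iff (hBbasis i') _ _).2 hres')
  rw [← ht1v, ← ht2v] at hshadow
  exact (zero_mem_closure_joinDifferences_iff (hBbasis i) _ _).1 hshadow

theorem absolute_shadow_of_resolvable_ambiguity
    {I : Type*} {M : I → Type*}
    [∀ i, AddCommGroup (M i)] [∀ i, UniformSpace (M i)] [∀ i, IsUniformAddGroup (M i)]
    [∀ i, CompleteSpace (M i)] [∀ i, T2Space (M i)]
    (B : ∀ i, ℕ → AddSubgroup (M i))
    (hBopen : ∀ i n, IsOpen (B i n : Set (M i)))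
    (hBanti : ∀ i n, (B i (n + 1) : Set (M i)) ⊆ (B i n : Set (M i)))
    (hBbasis : ∀ i, (nhds (0 : M i)).HasBasis (fun _ : ℕ => True)
      (fun n => (B i n : Set (M i))))
    (hBsep : ∀ i, ⋂ n, (B i n : Set (M i)) = {0})
    (R : ∀ i, Set (AddMonoid.End (M i)))
    (hRcont : ∀ i, ∀ r ∈ R i, Continuous r)
    (hRsmall : ∀ i, ∀ r ∈ R i, ∀ n : ℕ, ∀ a ∈ B i n, r a ∈ B i n)
    (T1 : ∀ i, Set (AddMonoid.End (M i)))
    (hT1cont : ∀ i, ∀ t ∈ T1 i, Continuous t)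
    (hT1comm : ∀ i, ∀ t ∈ T1 i, ∀ r ∈ R i, ∀ a : M i, t (r a) = r (t a))
    (Y : ∀ i, Set (M i))
    -- the resolvable ambiguity (t₁',μ',t₂') of T1(S)(i')
    (i i' : I)
    (t1' t2' : AddMonoid.End (M i')) (μ' : M i')
    (ht1' : t1' ∈ T1 i') (ht2' : t2' ∈ T1 i') (hμ'Y : μ' ∈ Y i')
    (hnt1' : t1' μ' ≠ μ') (hnt2' : t2' μ' ≠ μ')
    (hres' : ∀ n : ℕ, ∃ t3 ∈ TS (T1 i'), ∃ t4 ∈ TS (T1 i'),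
      t3 (t1' μ') - t4 (t2' μ') ∈ B i' n)
    -- the ambiguity (t₁,μ,t₂) of T1(S)(i), an absolute shadow of the former via v
    (t1 t2 : AddMonoid.End (M i)) (μ : M i)
    (ht1 : t1 ∈ T1 i) (ht2 : t2 ∈ T1 i) (hμY : μ ∈ Y i)
    (hnt1 : t1 μ ≠ μ) (hnt2 : t2 μ ≠ μ)
    (v : M i' →+ M i) (hvcont : Continuous v)
    (hvadv : ∀ t' ∈ TS (T1 i'), ∃ t ∈ TS (T1 i), ∀ a : M i', v (t' a) = t (v a))
    (hμ : μ = v μ') (ht1v : t1 μ = v (t1' μ')) (ht2v : t2 μ = v (t2' μ')) :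
    ∀ n : ℕ, ∃ t3 ∈ TS (T1 i), ∃ t4 ∈ TS (T1 i),
      t3 (t1 μ) - t4 (t2 μ) ∈ B i n :=
  absolute_shadow_of_resolvable_ambiguity_general B hBbasis T1 i i' t1' t2' μ' hres' t1 t2 μ v
    hvcont hvadv ht1v ht2v
end
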